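/- arXiv:0910.0045 — 2 statements merged into one kernel-verified Lean document; each statement's English description precedes it below -/
import Mathlib

section
/- Let A ⊆ X_i^* be computably enumerable and let g : A → X_2^* be a Gödel numbering. Then there exists a constant c > 0 such that for all u ∈ A, |H_2(g(u)) − log_2(i)·H_i(u)| ≤ c. -/
open scoped ENNReal

/-- Finite strings over an alphabet with `i` letters. -/
abbrev Str (i : ℕ) : Type := List (Fin i)

/-- A set of strings is prefix-free: no element is a proper prefix of another. -/
def PrefixFree {i : ℕ} (S : Set (Str i)) : Prop :=
  ∀ x ∈ S, ∀ y ∈ S, x <+: y → x = y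

/-- A self-delimiting machine over the alphabet with `i` letters: a partial computable
function on strings whose domain is prefix-free. -/
structure Machine (i : ℕ) where
  f : Str i →. Str i
  partrec : Partrec f
  prefixFree : PrefixFree f.Dom

/-- Program-size complexity of `x` relative to the machine `T`:
the least length of a program `y` with `T(y) = x` (with `min ∅ = ∞`). -/
noncomputable def Hc {i : ℕ} (T : Machine i) (x : Str i) : ℝ≥0∞ :=
  sInf {n : ℝ≥0∞ | ∃ y : Str i, (y.length : ℝ≥0∞) = n ∧ x ∈ T.f y}

/-- `U` is a universal machine: it minimizes program-size complexity up to an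
additive constant among all machines. -/
def IsUniversal {i : ℕ} (U : Machine i) : Prop :=
  ∀ T : Machine i, ∃ c : ℕ, ∀ x : Str i, Hc U x ≤ Hc T x + (c : ℝ≥0∞)

/-- A set of strings is computably enumerable if it is the domain of a
partial computable function. -/
def CEset {i : ℕ} (A : Set (Str i)) : Prop :=
  ∃ f : Str i →. Str i, Partrec f ∧ A = f.Dom

/-- A Gödel numbering for `L`: a computable function into binary strings,
injective on `L`. -/
def GoedelNumbering {i : ℕ} (L : Set (Str i)) (g : Str i → Str 2) : Prop :=
  Computable g ∧ Set.InjOn g L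

/-!
A string `y` over `b` letters names the `b`-adic interval `cylinder y` of length `b ^ (-|y|)`, and
`y` is a prefix of `y'` iff the interval of `y'` lies in that of `y`. A string `p` over `c` letters
whose interval lies inside that of `y` exists as soon as `c ^ (-|p|) ≤ b ^ (-|y|) / 2`; fixing
`|p| = ⌈log_c (2 b ^ |y|)⌉`, so that `|p| · log₂ c ≤ |y| · log₂ b + O(1)`, makes such codes usable
as programs. A machine over `c` letters that on input `p` searches for a halting program `y` of a
prefix-free machine `M` with `p` coding `y` is again prefix-free, because intervals of halting
programs of `M` are disjoint. Simulating `U_i` over two letters (and applying `g`), and `U_2` over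
`i` letters (and searching the c.e. set `A` for a `g`-preimage), gives the two inequalities up to
the constants of universality.
-/

open Nat.Partrec (Code) in
theorem Partrec.exists_computable_dom_iff {α σ : Type*} [Primcodable α] [Primcodable σ]
    {f : α →. σ} (hf : Partrec f) :
    ∃ h : α → ℕ → Bool, Computable₂ h ∧ ∀ a, (f a).Dom ↔ ∃ k, h a k = true := by
  obtain ⟨c, hc⟩ := Code.exists_code.1 hf
  refine ⟨fun a k => (c.evaln k (Encodable.encode a)).isSome, ?_, fun a => ?_⟩
  · exact (Primrec.option_isSome.comp (Code.primrec_evaln.comp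
      ((Primrec.snd.pair (Primrec.const c)).pair (Primrec.encode.comp Primrec.fst)))).to_comp.to₂
  · have hdom : (f a).Dom ↔ (c.eval (Encodable.encode a)).Dom := by
      simp [hc, Encodable.encodek]
    rw [hdom, Part.dom_iff_mem]
    simp only [Code.evaln_complete, Option.isSome_iff_exists, Option.mem_def]
    exact exists_comm

theorem Partrec.exists_search {α β σ : Type*} [Primcodable α] [Primcodable β] [Primcodable σ]
    {f : α →. σ} (hf : Partrec f) {r : β → α → Bool} (hr : Computable₂ r) :
    ∃ s : β →. α, Partrec s ∧ (∀ b a, a ∈ s b → (f a).Dom ∧ r b a = true) ∧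
      ∀ b a, (f a).Dom → r b a = true → (s b).Dom := by
  obtain ⟨h, hh, hdom⟩ := hf.exists_computable_dom_iff
  let step : β → ℕ → Option α := fun b n =>
    (Encodable.decode n.unpair.1 : Option α).bind fun a =>
      bif r b a && h a n.unpair.2 then some a else Option.none
  have hstep : Computable₂ step := by
    refine Computable.option_bind
      (Computable.decode.comp (Computable.fst.comp (Computable.unpair.comp Computable.snd))) ?_
    exact (Computable.cond (Primrec.and.to_comp.comp
        (hr.comp (Computable.fst.comp Computable.fst) Computable.snd)
        (hh.comp Computable.snd
          (Computable.snd.comp (Computable.unpair.comp (Computable.snd.comp Computable.fst)))))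
      (Computable.option_some.comp Computable.snd) (Computable.const Option.none)).to₂
  refine ⟨fun b => Nat.rfindOpt (step b), Partrec.rfindOpt hstep, fun b a ha => ?_,
    fun b a ha hra => ?_⟩
  · obtain ⟨n, hn⟩ := Nat.rfindOpt_spec ha
    simp only [step, Option.mem_def, Option.bind_eq_some_iff, Bool.cond_eq_ite] at hn
    obtain ⟨a', -, hn⟩ := hn
    split_ifs at hn with hc
    cases hn
    simp only [Bool.and_eq_true] at hc
    exact ⟨(hdom a).2 ⟨_, hc.2⟩, hc.1⟩
  · obtain ⟨k, hk⟩ := (hdom a).1 ha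
    refine Nat.rfindOpt_dom.2 ⟨Nat.pair (Encodable.encode a) k, a, ?_⟩
    simp [step, Encodable.encodek, hra, hk]

theorem Partrec.exists_inverse_on_dom {α β σ : Type*} [Primcodable α] [Primcodable β]
    [Primcodable σ] {f : α →. σ} (hf : Partrec f) {g : α → β} (hg : Computable g)
    (hinj : Set.InjOn g f.Dom) :
    ∃ ginv : β →. α, Partrec ginv ∧ ∀ a ∈ f.Dom, a ∈ ginv (g a) := by
  classical
  obtain ⟨s, hs, hsound, hcomplete⟩ :=
    hf.exists_search (r := fun b a => decide (g a = b))
      (Primrec.eq.decide.to_comp.comp (hg.comp Computable.snd) Computable.fst).to₂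
  refine ⟨s, hs, fun a ha => ?_⟩
  obtain ⟨a', ha'⟩ := Part.dom_iff_mem.1 (hcomplete (g a) a ha (by simp))
  obtain ⟨ha'dom, hga'⟩ := hsound _ _ ha'
  rwa [hinj ha'dom ha (by simpa using hga')] at ha'

section Cylinders

variable {b c : ℕ}

-- `x` read as a base-`b` numeral, most significant letter first
def numVal (x : Str b) : ℕ := Nat.ofDigits b (x.reverse.map Fin.val)

theorem numVal_append (x y : Str b) : numVal (x ++ y) = numVal x * b ^ y.length + numVal y := by
  simp only [numVal, List.reverse_append, List.map_append, Nat.ofDigits_append, List.length_map,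
    List.length_reverse]
  ring

theorem numVal_lt (hb : 1 < b) (x : Str b) : numVal x < b ^ x.length := by
  have h := Nat.ofDigits_lt_base_pow_length hb (l := x.reverse.map Fin.val) (by simp)
  rwa [List.length_map, List.length_reverse] at h

theorem numVal_injective_of_length_eq (hb : 1 < b) {x y : Str b} (hl : x.length = y.length)
    (h : numVal x = numVal y) : x = y := by
  have := Nat.ofDigits_inj_of_len_eq hb (by simpa using hl) (by simp) (by simp) h
  exact List.reverse_injective ((List.map_injective_iff.2 Fin.val_injective) this)

theorem exists_length_eq_numVal_eq {L w : ℕ} (hw : w < b ^ L) :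
    ∃ x : Str b, x.length = L ∧ numVal x = w := by
  induction L generalizing w with
  | zero => exact ⟨[], rfl, by simp_all [numVal]⟩
  | succ L ih =>
    have hb : 0 < b := Nat.pos_of_ne_zero fun h => by simp_all
    obtain ⟨x, hxl, hxv⟩ := ih (Nat.div_lt_of_lt_mul (by rwa [← pow_succ']))
    refine ⟨x ++ [⟨w % b, Nat.mod_lt w hb⟩], by simp [hxl], ?_⟩
    rw [numVal_append, hxv]
    simp [numVal, Nat.div_add_mod']

def cylinder (x : Str b) : Set ℚ :=
  Set.Ico (numVal x / b ^ x.length) ((numVal x + 1) / b ^ x.length)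

theorem cylinder_nonempty (hb : 0 < b) (x : Str b) : (cylinder x).Nonempty :=
  Set.nonempty_Ico.2 (div_lt_div_of_pos_right (lt_add_one _) (by positivity))

theorem cylinder_subset_cylinder (hb : 0 < b) (hc : 0 < c) {x : Str b} {y : Str c}
    (h₁ : numVal x * c ^ y.length ≤ numVal y * b ^ x.length)
    (h₂ : (numVal y + 1) * b ^ x.length ≤ (numVal x + 1) * c ^ y.length) :
    cylinder y ⊆ cylinder x := by
  apply Set.Ico_subset_Ico
  · rw [div_le_div_iff₀ (by positivity) (by positivity)]
    exact_mod_cast h₁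
  · rw [div_le_div_iff₀ (by positivity) (by positivity)]
    exact_mod_cast h₂

theorem cylinder_subset_of_prefix (hb : 1 < b) {x y : Str b} (h : x <+: y) :
    cylinder y ⊆ cylinder x := by
  obtain ⟨t, rfl⟩ := h
  have ht := numVal_lt hb t
  apply cylinder_subset_cylinder (by omega) (by omega) <;>
    simp only [numVal_append, List.length_append, pow_add]
  · nlinarith [Nat.zero_le (numVal t * b ^ x.length)]
  · nlinarith [Nat.mul_le_mul_right (b ^ x.length) ht]

theorem eq_of_mem_cylinder (hb : 1 < b) {x y : Str b} (hl : x.length = y.length) {q : ℚ}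
    (hx : q ∈ cylinder x) (hy : q ∈ cylinder y) : x = y := by
  have hpow : (0 : ℚ) < (b : ℚ) ^ x.length := by positivity
  rw [cylinder, ← hl] at hy
  have h₁ : numVal x < numVal y + 1 := by
    exact_mod_cast (div_lt_div_iff_of_pos_right hpow).1 (hx.1.trans_lt hy.2)
  have h₂ : numVal y < numVal x + 1 := by
    exact_mod_cast (div_lt_div_iff_of_pos_right hpow).1 (hy.1.trans_lt hx.2)
  exact numVal_injective_of_length_eq hb hl (by omega)

theorem prefix_or_prefix_of_mem_cylinder (hb : 1 < b) {x y : Str b} {q : ℚ}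
    (hx : q ∈ cylinder x) (hy : q ∈ cylinder y) : x <+: y ∨ y <+: x := by
  wlog hl : x.length ≤ y.length generalizing x y
  · exact (this hy hx (by omega)).symm
  have hq : q ∈ cylinder (y.take x.length) := cylinder_subset_of_prefix hb (List.take_prefix _ _) hy
  have := eq_of_mem_cylinder hb (by simp [hl]) hx hq
  exact Or.inl (this ▸ List.take_prefix _ _)

end Cylinders

section Codes

variable {b c : ℕ}

theorem primrec_numVal : Primrec (numVal (b := b)) := by
  have h : Primrec fun x : Str b => (x.reverse.map Fin.val).foldr (fun d a => d + b * a) 0 :=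
    Primrec.list_foldr
      (Primrec.list_map Primrec.list_reverse (Primrec.fin_val.comp Primrec.snd).to₂)
      (Primrec.const 0) (Primrec.nat_add.comp (Primrec.fst.comp Primrec.snd)
        (Primrec.nat_mul.comp (Primrec.const b) (Primrec.snd.comp Primrec.snd))).to₂
  exact h.of_eq fun x => by simp [numVal, Nat.ofDigits_eq_foldr]

theorem Primrec.nat_pow : Primrec₂ ((· ^ ·) : ℕ → ℕ → ℕ) :=
  Primrec₂.unpaired'.1 Nat.Primrec.pow

theorem Computable.nat_clog (hc : 1 < c) : Computable (Nat.clog c) := by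
  have hex : ∀ n, ∃ L, n ≤ c ^ L := fun n => ⟨n, (Nat.lt_pow_self hc).le⟩
  have hdec : ComputablePred fun q : ℕ × ℕ => q.1 ≤ c ^ q.2 :=
    PrimrecPred.computablePred
      (Primrec.nat_le.comp Primrec.fst (Primrec.nat_pow.comp (Primrec.const c) Primrec.snd))
  refine (Computable.find hdec hex).of_eq fun n => le_antisymm ?_ ?_
  · exact Nat.find_min' (hex n) (Nat.le_pow_clog hc n)
  · exact (Nat.clog_le_iff_le_pow hc).2 (Nat.find_spec (hex n))

def codeLength (b c n : ℕ) : ℕ := Nat.clog c (2 * b ^ n)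

-- The interval of `p` lies in that of `y`. Fixing `|p|` in terms of `|y|` ensures that two codes
-- of the same string are never proper prefixes of each other.
def IsCode (y : Str b) (p : Str c) : Prop :=
  p.length = codeLength b c y.length ∧
    numVal y * c ^ p.length ≤ numVal p * b ^ y.length ∧
    (numVal p + 1) * b ^ y.length ≤ (numVal y + 1) * c ^ p.length

instance (y : Str b) (p : Str c) : Decidable (IsCode y p) := by
  unfold IsCode; infer_instance

theorem computable₂_decide_isCode (hc : 1 < c) :
    Computable₂ fun (p : Str c) (y : Str b) => decide (IsCode y p) := by
  have hlen : Computable fun q : Str c × Str b => decide (q.1.length = codeLength b c q.2.length) :=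
    Primrec.eq.decide.to_comp.comp (Primrec.list_length.comp Primrec.fst).to_comp
      ((Computable.nat_clog hc).comp (Primrec.nat_mul.comp (Primrec.const 2)
        (Primrec.nat_pow.comp (Primrec.const b)
          (Primrec.list_length.comp Primrec.snd))).to_comp)
  have hlow : Primrec fun q : Str c × Str b =>
      decide (numVal q.2 * c ^ q.1.length ≤ numVal q.1 * b ^ q.2.length) :=
    Primrec.nat_le.decide.comp
      (Primrec.nat_mul.comp (primrec_numVal.comp Primrec.snd)
        (Primrec.nat_pow.comp (Primrec.const c) (Primrec.list_length.comp Primrec.fst)))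
      (Primrec.nat_mul.comp (primrec_numVal.comp Primrec.fst)
        (Primrec.nat_pow.comp (Primrec.const b) (Primrec.list_length.comp Primrec.snd)))
  have hupp : Primrec fun q : Str c × Str b =>
      decide ((numVal q.1 + 1) * b ^ q.2.length ≤ (numVal q.2 + 1) * c ^ q.1.length) :=
    Primrec.nat_le.decide.comp
      (Primrec.nat_mul.comp (Primrec.succ.comp (primrec_numVal.comp Primrec.fst))
        (Primrec.nat_pow.comp (Primrec.const b) (Primrec.list_length.comp Primrec.snd)))
      (Primrec.nat_mul.comp (Primrec.succ.comp (primrec_numVal.comp Primrec.snd))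
        (Primrec.nat_pow.comp (Primrec.const c) (Primrec.list_length.comp Primrec.fst)))
  exact (Primrec.and.to_comp.comp hlen (Primrec.and.comp hlow hupp).to_comp).of_eq
    fun q => by rw [Bool.eq_iff_iff]; simp only [Bool.and_eq_true, decide_eq_true_iff]; rfl

-- `w = ⌈v * B / d⌉`; the room `2 * d ≤ B` keeps `(w + 1) * d` below `(v + 1) * B`.
theorem exists_lt_mul_le_and_succ_mul_le {v d B : ℕ} (hv : v < d) (hroom : 2 * d ≤ B) :
    ∃ w < B, v * B ≤ w * d ∧ (w + 1) * d ≤ (v + 1) * B := by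
  have hd : 0 < d := by omega
  have hdiv := Nat.div_add_mod (v * B + d - 1) d
  have hmod := Nat.mod_lt (v * B + d - 1) hd
  set w := (v * B + d - 1) / d
  have hw₁ : v * B ≤ w * d := by rw [Nat.mul_comm w]; omega
  have hw₂ : (w + 1) * d ≤ (v + 1) * B := by rw [add_mul, add_mul, Nat.mul_comm w]; omega
  refine ⟨w, ?_, hw₁, hw₂⟩
  have : (w + 1) * d ≤ B * d := hw₂.trans (by rw [Nat.mul_comm B]; exact Nat.mul_le_mul_right B hv)
  exact Nat.lt_of_succ_le (Nat.le_of_mul_le_mul_right this hd)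

theorem exists_isCode (hb : 1 < b) (hc : 1 < c) (y : Str b) : ∃ p : Str c, IsCode y p := by
  obtain ⟨w, hwB, hw₁, hw₂⟩ :=
    exists_lt_mul_le_and_succ_mul_le (numVal_lt hb y) (Nat.le_pow_clog hc _)
  obtain ⟨p, hpl, rfl⟩ := exists_length_eq_numVal_eq hwB
  exact ⟨p, hpl, by rwa [hpl], by rwa [hpl]⟩

theorem IsCode.cylinder_subset (hb : 0 < b) (hc : 0 < c) {y : Str b} {p : Str c}
    (h : IsCode y p) : cylinder p ⊆ cylinder y :=
  cylinder_subset_cylinder hb hc h.2.1 h.2.2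

theorem IsCode.prefix_or_prefix (hb : 1 < b) (hc : 1 < c) {y y' : Str b} {p p' : Str c}
    (h : IsCode y p) (h' : IsCode y' p') (hp : p <+: p') : y <+: y' ∨ y' <+: y := by
  obtain ⟨q, hq⟩ := cylinder_nonempty (by omega) p'
  exact prefix_or_prefix_of_mem_cylinder hb
    (h.cylinder_subset (by omega) (by omega) (cylinder_subset_of_prefix hc hp hq))
    (h'.cylinder_subset (by omega) (by omega) hq)

theorem codeLength_mul_logb_lt (hb : 1 < b) (hc : 1 < c) (n : ℕ) :
    (codeLength b c n : ℝ) * Real.logb 2 c < n * Real.logb 2 b + Real.logb 2 c + 1 := by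
  have h2 : 1 < 2 * b ^ n := by have := Nat.one_le_pow n b (by omega); omega
  have hL : 1 ≤ codeLength b c n := Nat.clog_pos hc h2
  have hlt : (c : ℝ) ^ (codeLength b c n - 1) < 2 * (b : ℝ) ^ n := by
    exact_mod_cast Nat.pow_pred_clog_lt_self hc h2
  have := Real.logb_lt_logb one_lt_two (by positivity) hlt
  rw [Real.logb_pow, Real.logb_mul two_ne_zero (by positivity), Real.logb_pow,
    Real.logb_self_eq_one one_lt_two, Nat.cast_sub hL] at this
  push_cast at this
  linarith

theorem IsCode.eq_of_prefix (hb : 1 < b) (hc : 1 < c) {S : Set (Str b)}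
    (hS : PrefixFree S) {y y' : Str b} (hy : y ∈ S) (hy' : y' ∈ S) {p p' : Str c}
    (h : IsCode y p) (h' : IsCode y' p') (hp : p <+: p') : y = y' := by
  rcases h.prefix_or_prefix hb hc h' hp with hyy' | hy'y
  · exact hS _ hy _ hy' hyy'
  · exact (hS _ hy' _ hy hy'y).symm

end Codes

namespace Machine

variable {b c : ℕ}

theorem exists_simulation (hb : 1 < b) (hc : 1 < c) (M : Machine b) {φ : Str b →. Str c}
    (hφ : Partrec φ) :
    ∃ T : Machine c, ∀ y x z, x ∈ M.f y → z ∈ φ x →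
      ∃ p, z ∈ T.f p ∧ p.length = codeLength b c y.length := by
  obtain ⟨s, hs, hsound, hcomplete⟩ := M.partrec.exists_search (computable₂_decide_isCode hc)
  have hsound' : ∀ p y, y ∈ s p → y ∈ M.f.Dom ∧ IsCode y p := fun p y hy =>
    (hsound p y hy).imp_right of_decide_eq_true
  refine ⟨⟨fun p => (s p).bind fun y => (M.f y).bind φ,
    hs.bind ((M.partrec.comp Computable.snd).bind (hφ.comp Computable.snd).to₂).to₂, ?_⟩, ?_⟩
  · intro p hp p' hp' hpp'
    obtain ⟨y, hy⟩ := Part.dom_iff_mem.1 (Part.Dom.of_bind (f := fun y => (M.f y).bind φ) hp)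
    obtain ⟨y', hy'⟩ := Part.dom_iff_mem.1 (Part.Dom.of_bind (f := fun y => (M.f y).bind φ) hp')
    obtain ⟨hyM, hyp⟩ := hsound' p y hy
    obtain ⟨hyM', hyp'⟩ := hsound' p' y' hy'
    have hyy' := hyp.eq_of_prefix hb hc M.prefixFree hyM hyM' hyp' hpp'
    exact hpp'.eq_of_length (by rw [hyp.1, hyp'.1, hyy'])
  · intro y x z hx hz
    have hyM : y ∈ M.f.Dom := Part.dom_iff_mem.2 ⟨x, hx⟩
    obtain ⟨p, hp⟩ := exists_isCode hb hc y
    obtain ⟨y', hy'⟩ := Part.dom_iff_mem.1 (hcomplete p y hyM (decide_eq_true hp))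
    obtain ⟨hyM', hy'p⟩ := hsound' p y' hy'
    obtain rfl := hy'p.eq_of_prefix hb hc M.prefixFree hyM' hyM hp List.prefix_rfl
    exact ⟨p, Part.mem_bind_iff.2 ⟨y', hy', Part.mem_bind_iff.2 ⟨x, hx, hz⟩⟩, hp.1⟩

theorem Hc_le_length (T : Machine b) {x y : Str b} (h : x ∈ T.f y) :
    Hc T x ≤ y.length :=
  sInf_le ⟨y, rfl, h⟩

theorem exists_length_eq_Hc {T : Machine b} {x : Str b} (h : Hc T x ≠ ⊤) :
    ∃ y, x ∈ T.f y ∧ (y.length : ℝ≥0∞) = Hc T x := by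
  classical
  have hex : ∃ n, ∃ y : Str b, y.length = n ∧ x ∈ T.f y := by
    by_contra hne
    exact h (sInf_eq_top.2 fun _ ⟨y, _, hy⟩ => absurd ⟨_, y, rfl, hy⟩ hne)
  obtain ⟨y, hyl, hy⟩ := Nat.find_spec hex
  refine ⟨y, hy, le_antisymm ?_ (T.Hc_le_length hy)⟩
  refine le_sInf fun _ ⟨y', hy'l, hy'⟩ => ?_
  rw [← hy'l, hyl]
  exact_mod_cast Nat.find_min' hex ⟨y', rfl, hy'⟩

theorem exists_logb_mul_Hc_le (hb : 1 < b) (hc : 1 < c) (M : Machine b) {φ : Str b →. Str c}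
    (hφ : Partrec φ) :
    ∃ T : Machine c, ∀ x z, z ∈ φ x →
      ENNReal.ofReal (Real.logb 2 c) * Hc T z ≤
        ENNReal.ofReal (Real.logb 2 b) * Hc M x + ENNReal.ofReal (Real.logb 2 c + 1) := by
  obtain ⟨T, hT⟩ := M.exists_simulation hb hc hφ
  refine ⟨T, fun x z hz => ?_⟩
  have hlogb : 0 < Real.logb 2 b := Real.logb_pos one_lt_two (by exact_mod_cast hb)
  have hlogc : 0 < Real.logb 2 c := Real.logb_pos one_lt_two (by exact_mod_cast hc)
  by_cases htop : Hc M x = ⊤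
  · rw [htop, ENNReal.mul_top (ENNReal.ofReal_pos.2 hlogb).ne', top_add]
    exact le_top
  obtain ⟨y, hy, hyl⟩ := exists_length_eq_Hc htop
  obtain ⟨p, hp, hpl⟩ := hT y x z hy hz
  calc ENNReal.ofReal (Real.logb 2 c) * Hc T z
      ≤ ENNReal.ofReal (Real.logb 2 c) * p.length := by gcongr; exact T.Hc_le_length hp
    _ = ENNReal.ofReal (codeLength b c y.length * Real.logb 2 c) := by
      rw [hpl, mul_comm, ENNReal.ofReal_mul (by positivity), ENNReal.ofReal_natCast]
    _ ≤ ENNReal.ofReal (y.length * Real.logb 2 b + Real.logb 2 c + 1) :=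
      ENNReal.ofReal_le_ofReal (codeLength_mul_logb_lt hb hc _).le
    _ = ENNReal.ofReal (Real.logb 2 b) * Hc M x + ENNReal.ofReal (Real.logb 2 c + 1) := by
      rw [← hyl, add_assoc, ENNReal.ofReal_add (by positivity) (by positivity), mul_comm,
        ENNReal.ofReal_mul hlogb.le, ENNReal.ofReal_natCast]

end Machine

theorem IsUniversal.exists_logb_mul_Hc_le {b c : ℕ} (hb : 1 < b) (hc : 1 < c) {U : Machine c}
    (hU : IsUniversal U) (M : Machine b) {φ : Str b →. Str c} (hφ : Partrec φ) :
    ∃ C : ℝ, 0 ≤ C ∧ ∀ x z, z ∈ φ x →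
      ENNReal.ofReal (Real.logb 2 c) * Hc U z ≤
        ENNReal.ofReal (Real.logb 2 b) * Hc M x + ENNReal.ofReal C := by
  obtain ⟨T, hT⟩ := M.exists_logb_mul_Hc_le hb hc hφ
  obtain ⟨k, hk⟩ := hU T
  have hlogc : 0 ≤ Real.logb 2 c := Real.logb_nonneg one_lt_two (by exact_mod_cast hc.le)
  refine ⟨Real.logb 2 c + 1 + Real.logb 2 c * k, by positivity, fun x z hz => ?_⟩
  calc ENNReal.ofReal (Real.logb 2 c) * Hc U z
      ≤ ENNReal.ofReal (Real.logb 2 c) * (Hc T z + k) := by gcongr; exact hk z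
    _ = ENNReal.ofReal (Real.logb 2 c) * Hc T z + ENNReal.ofReal (Real.logb 2 c * k) := by
      rw [mul_add, ENNReal.ofReal_mul hlogc, ENNReal.ofReal_natCast]
    _ ≤ ENNReal.ofReal (Real.logb 2 b) * Hc M x + ENNReal.ofReal (Real.logb 2 c + 1) +
        ENNReal.ofReal (Real.logb 2 c * k) := by gcongr; exact hT x z hz
    _ = ENNReal.ofReal (Real.logb 2 b) * Hc M x +
        ENNReal.ofReal (Real.logb 2 c + 1 + Real.logb 2 c * k) := by
      rw [add_assoc, ← ENNReal.ofReal_add (by positivity) (by positivity)]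

/-- Invariance theorem: for a c.e. set `A` and a Gödel numbering `g : A → X₂*`,
there is a constant `c > 0` with `|H₂(g(u)) − log₂(i)·Hᵢ(u)| ≤ c` for all `u ∈ A`
(the absolute difference is expressed by the two inequalities). -/
theorem stmt_1 {i : ℕ} (hi : 2 ≤ i) (Ui : Machine i) (hUi : IsUniversal Ui)
    (U2 : Machine 2) (hU2 : IsUniversal U2)
    (A : Set (Str i)) (hA : CEset A) (g : Str i → Str 2) (hg : GoedelNumbering A g) :
    ∃ c : ℝ, 0 < c ∧ ∀ u ∈ A,
      Hc U2 (g u) ≤ ENNReal.ofReal (Real.logb 2 i) * Hc Ui u + ENNReal.ofReal c ∧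
      ENNReal.ofReal (Real.logb 2 i) * Hc Ui u ≤ Hc U2 (g u) + ENNReal.ofReal c := by
  obtain ⟨hgc, hginj⟩ := hg
  obtain ⟨fA, hfA, rfl⟩ := hA
  obtain ⟨ginv, hginv, hginv_mem⟩ := hfA.exists_inverse_on_dom hgc hginj
  obtain ⟨C₁, hC₁, h₁⟩ := hU2.exists_logb_mul_Hc_le hi one_lt_two Ui hgc
  obtain ⟨C₂, hC₂, h₂⟩ := hUi.exists_logb_mul_Hc_le one_lt_two hi U2 hginv
  have hlog2 : ENNReal.ofReal (Real.logb 2 ((2 : ℕ) : ℝ)) = 1 := by simp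
  refine ⟨C₁ + C₂ + 1, by positivity, fun u hu => ⟨?_, ?_⟩⟩
  · calc Hc U2 (g u) ≤ ENNReal.ofReal (Real.logb 2 i) * Hc Ui u + ENNReal.ofReal C₁ := by
          simpa [hlog2] using h₁ u (g u) (Part.mem_some _)
      _ ≤ _ := by gcongr; linarith
  · calc ENNReal.ofReal (Real.logb 2 i) * Hc Ui u ≤ Hc U2 (g u) + ENNReal.ofReal C₂ := by
          simpa [hlog2] using h₂ (g u) u (hginv_mem u hu)
      _ ≤ _ := by gcongr; linarith
end

section
/- Let g : X_i^* → X_2^* be a Gödel numbering and let f : ℕ → ℕ be a function for which there is a real a > 0 with f(n) ≥ a·n for all n ≥ 1. Then there exists a constant M such that H_2(g(x)) ≤ M·f(|x|_i) for every nonempty x ∈ X_i^*; consequently, for every N ≥ M and every n ≥ 1 the set {x ∈ X_i^* : |x|_i = n and H_2(g(x)) ≤ N·f(n)} is all of X_i^n, so lim_{n→∞} i^{−n}·card{x ∈ X_i^* : |x|_i = n and H_2(g(x)) ≤ N·f(n)} = 1 ≠ 0. -/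
open scoped ENNReal

/-!
Letters `a ∈ Xᵢ` are written in binary as `1^(a+1) 0`, and a word is terminated by an extra `0`.
This code is prefix-free, computable and of length at most `(i+1)|x|+1`, so a binary machine
that searches for the word coded by its program and outputs its Gödel number is self-delimiting.
Universality of `U₂` then gives `H₂(g(x)) ≤ (i+1)|x| + C`, which is at most `M·f(|x|)` once `f`
grows linearly. Hence for `N ≥ M` every word of length `n ≥ 1` is counted and the density is `1`.
-/

open List in
def unaryCode {k : ℕ} (x : Str k) : Str 2 :=
  x.flatMap (fun a => replicate (a.val + 1) 1 ++ [0]) ++ [0]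

namespace unaryCode

variable {k : ℕ}

@[simp] lemma nil : unaryCode ([] : Str k) = [0] := rfl

@[simp] lemma cons (a : Fin k) (x : Str k) :
    unaryCode (a :: x) = List.replicate (a.val + 1) 1 ++ 0 :: unaryCode x := by
  simp [unaryCode]

lemma length_le (x : Str k) : (unaryCode x).length ≤ (k + 1) * x.length + 1 := by
  induction x with
  | nil => simp
  | cons a x ih =>
    have := a.isLt
    simp only [cons, List.length_append, List.length_replicate, List.length_cons]
    nlinarith

lemma replicate_append_prefix {m n : ℕ} {s t : Str 2}
    (h : List.replicate m 1 ++ 0 :: s <+: List.replicate n 1 ++ 0 :: t) : m = n ∧ s <+: t := by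
  induction m generalizing n with
  | zero => cases n <;> simp_all [List.replicate_succ]
  | succ m ih =>
    cases n with
    | zero => simp [List.replicate_succ] at h
    | succ n =>
      simp only [List.replicate_succ, List.cons_append, List.cons_prefix_cons, true_and] at h
      simpa using ih h

lemma eq_of_prefix {x y : Str k} (h : unaryCode x <+: unaryCode y) : x = y := by
  induction x generalizing y with
  | nil => cases y <;> simp_all [List.replicate_succ]
  | cons a x ih =>
    cases y with
    | nil => simp [List.replicate_succ] at h
    | cons b y =>
      obtain ⟨hab, h⟩ := replicate_append_prefix (by simpa using h)
      rw [Fin.ext (Nat.succ_injective hab), ih h]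

end unaryCode

lemma Primrec.list_replicate_const {α : Type*} [Primcodable α] (a : α) :
    Primrec fun n : ℕ => List.replicate n a :=
  (Primrec.list_map Primrec.list_range (Primrec.const a).to₂).of_eq fun n => by
    simp [List.map_const']

lemma primrec_unaryCode {k : ℕ} : Primrec (unaryCode (k := k)) :=
  Primrec.list_append.comp
    (Primrec.list_flatMap Primrec.id (Primrec.list_append.comp
      ((Primrec.list_replicate_const 1).comp (Primrec.succ.comp (Primrec.fin_val.comp Primrec.snd)))
      (Primrec.const [0])).to₂)
    (Primrec.const [0])

lemma Nat.mem_rfindOpt_of_unique {α : Type*} {f : ℕ → Option α} {n : ℕ} {a : α}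
    (h : a ∈ f n) (hu : ∀ m, ∀ b ∈ f m, b = a) : a ∈ Nat.rfindOpt f := by
  obtain ⟨b, hb⟩ := Part.dom_iff_mem.1 (Nat.rfindOpt_dom.2 ⟨n, a, h⟩)
  obtain ⟨m, hm⟩ := Nat.rfindOpt_spec hb
  rwa [hu m b hm] at hb

section Decoder

variable {k : ℕ} {α : Type*} [Primcodable α] {c : α → Str k}

def decodeThen (c : α → Str k) (h : α → Str k) (p : Str k) (n : ℕ) : Option (Str k) :=
  (Encodable.decode n : Option α).bind fun x => if c x = p then some (h x) else none

lemma mem_decodeThen {h : α → Str k} {p q : Str k} {n : ℕ} :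
    q ∈ decodeThen c h p n ↔ ∃ x, Encodable.decode n = some x ∧ c x = p ∧ h x = q := by
  simp only [decodeThen, Option.mem_def, Option.bind_eq_some_iff]
  refine exists_congr fun x => and_congr_right fun _ => ?_
  split_ifs with hx <;> simp [hx]

lemma computable₂_decodeThen (hc : Computable c) {h : α → Str k} (hh : Computable h) :
    Computable₂ (decodeThen c h) := by
  have hmatch : Computable fun q : (Str k × ℕ) × α => decide (c q.2 = q.1.1) :=
    Primrec.eq.decide.to_comp.comp (hc.comp Computable.snd) (Computable.fst.comp Computable.fst)
  refine Computable.option_bind (Computable.decode.comp Computable.snd) ?_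
  exact (Computable.cond hmatch (Computable.option_some.comp (hh.comp Computable.snd))
    (Computable.const none)).of_eq (g := fun q => if c q.2 = q.1.1 then some (h q.2) else none)
    fun q => by simp [Bool.cond_decide]

theorem exists_machine_of_prefix_code (hc : Computable c) (hpre : ∀ x y, c x <+: c y → x = y)
    {h : α → Str k} (hh : Computable h) : ∃ T : Machine k, ∀ x, h x ∈ T.f (c x) := by
  have hdom : ∀ p, (Nat.rfindOpt (decodeThen c h p)).Dom → ∃ x, c x = p := fun p hp => by
    obtain ⟨n, q, hq⟩ := Nat.rfindOpt_dom.1 hp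
    obtain ⟨x, -, hx, -⟩ := mem_decodeThen.1 hq
    exact ⟨x, hx⟩
  refine ⟨⟨fun p => Nat.rfindOpt (decodeThen c h p),
    Partrec.rfindOpt (computable₂_decodeThen hc hh), ?_⟩, fun x => ?_⟩
  · intro p hp p' hp' hpp'
    obtain ⟨x, rfl⟩ := hdom p hp
    obtain ⟨x', rfl⟩ := hdom p' hp'
    rw [hpre x x' hpp']
  · refine Nat.mem_rfindOpt_of_unique (n := Encodable.encode x)
      (mem_decodeThen.2 ⟨x, Encodable.encodek x, rfl, rfl⟩) fun m q hq => ?_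
    obtain ⟨x', -, hx', rfl⟩ := mem_decodeThen.1 hq
    rw [hpre x' x (hx' ▸ List.prefix_refl _)]

theorem Hc_le_of_mem {T : Machine k} {p q : Str k} (h : q ∈ T.f p) :
    Hc T q ≤ p.length :=
  sInf_le ⟨p, rfl, h⟩

theorem IsUniversal.exists_Hc_le_length_code {U : Machine k} (hU : IsUniversal U)
    (hc : Computable c) (hpre : ∀ x y, c x <+: c y → x = y) {h : α → Str k}
    (hh : Computable h) : ∃ C : ℕ, ∀ x, Hc U (h x) ≤ (c x).length + C := by
  obtain ⟨T, hT⟩ := exists_machine_of_prefix_code hc hpre hh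
  obtain ⟨C, hC⟩ := hU T
  exact ⟨C, fun x => (hC (h x)).trans (add_le_add_left (Hc_le_of_mem (hT x)) _)⟩

end Decoder

lemma exists_add_le_mul_of_linear_le {f : ℕ → ℕ} {a : ℝ} (ha : 0 < a)
    (hf : ∀ n : ℕ, 1 ≤ n → a * n ≤ f n) (b c : ℕ) :
    ∃ M : ℕ, ∀ n : ℕ, 1 ≤ n → b * n + c ≤ M * f n := by
  refine ⟨(b + c) * ⌈a⁻¹⌉₊, fun n hn => ?_⟩
  have hn_le : n ≤ ⌈a⁻¹⌉₊ * f n := by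
    have : (n : ℝ) ≤ ⌈a⁻¹⌉₊ * f n :=
      calc (n : ℝ) = a⁻¹ * (a * n) := by field_simp
        _ ≤ a⁻¹ * f n := by gcongr; exact hf n hn
        _ ≤ ⌈a⁻¹⌉₊ * f n := by gcongr; exact Nat.le_ceil _
    exact_mod_cast this
  calc b * n + c ≤ (b + c) * n := by nlinarith
    _ ≤ (b + c) * (⌈a⁻¹⌉₊ * f n) := Nat.mul_le_mul_left _ hn_le
    _ = (b + c) * ⌈a⁻¹⌉₊ * f n := by ring

lemma ncard_setOf_length_eq (α : Type*) [Fintype α] (n : ℕ) :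
    {x : List α | x.length = n}.ncard = Fintype.card α ^ n := by
  rw [← Nat.card_coe_set_eq, ← card_vector, ← Nat.card_eq_fintype_card]
  exact Nat.card_congr (Equiv.subtypeEquivRight fun _ => Iff.rfl)

theorem stmt_16_general {i : ℕ} (hi : 2 ≤ i)
    (U2 : Machine 2) (hU2 : IsUniversal U2)
    (g : Str i → Str 2) (hg : GoedelNumbering Set.univ g)
    (f : ℕ → ℕ) (a : ℝ) (ha : 0 < a) (hf : ∀ n : ℕ, 1 ≤ n → a * (n : ℝ) ≤ (f n : ℝ)) :
    ∃ M : ℕ,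
      (∀ x : Str i, x ≠ [] → Hc U2 (g x) ≤ ((M * f x.length : ℕ) : ℝ≥0∞)) ∧
      ∀ N : ℕ, M ≤ N →
        (∀ n : ℕ, 1 ≤ n →
          {x : Str i | x.length = n ∧ Hc U2 (g x) ≤ ((N * f n : ℕ) : ℝ≥0∞)} =
            {x : Str i | x.length = n}) ∧
        Filter.Tendsto
          (fun n : ℕ =>
            (Set.ncard {x : Str i | x.length = n ∧ Hc U2 (g x) ≤ ((N * f n : ℕ) : ℝ≥0∞)} : ℝ)
              / (i : ℝ) ^ n)
          Filter.atTop (nhds 1) := by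
  obtain ⟨hgc, -⟩ := hg
  obtain ⟨C, hC⟩ := hU2.exists_Hc_le_length_code primrec_unaryCode.to_comp
    (fun x y => unaryCode.eq_of_prefix) hgc
  obtain ⟨M, hM⟩ := exists_add_le_mul_of_linear_le ha hf (i + 1) (1 + C)
  have hbound : ∀ x : Str i, x ≠ [] → Hc U2 (g x) ≤ ((M * f x.length : ℕ) : ℝ≥0∞) := by
    intro x hx
    calc Hc U2 (g x) ≤ (unaryCode x).length + C := hC x
      _ ≤ (((i + 1) * x.length + (1 + C) : ℕ) : ℝ≥0∞) := by
        rw [← add_assoc]; exact_mod_cast Nat.add_le_add_right (unaryCode.length_le x) C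
      _ ≤ _ := by exact_mod_cast hM _ (List.length_pos_iff.2 hx)
  have hall : ∀ N, M ≤ N → ∀ n, 1 ≤ n →
      {x : Str i | x.length = n ∧ Hc U2 (g x) ≤ ((N * f n : ℕ) : ℝ≥0∞)} =
        {x : Str i | x.length = n} := by
    rintro N hN n hn
    refine Set.sep_eq_self_iff_mem_true.2 fun x (hx : x.length = n) => ?_
    calc Hc U2 (g x) ≤ ((M * f n : ℕ) : ℝ≥0∞) :=
          hx ▸ hbound x (List.ne_nil_of_length_pos (by omega))
      _ ≤ _ := by gcongr
  refine ⟨M, hbound, fun N hN => ⟨hall N hN, tendsto_const_nhds.congr' ?_⟩⟩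
  filter_upwards [Filter.eventually_ge_atTop 1] with n hn
  rw [hall N hN n hn, ncard_setOf_length_eq, Fintype.card_fin, Nat.cast_pow,
    div_self (pow_ne_zero _ (by norm_cast; omega))]

/-- If `f : ℕ → ℕ` grows at least linearly (`f(n) ≥ a·n` for some real `a > 0`), then
for a Gödel numbering `g` there is `M` with `H₂(g(x)) ≤ M·f(|x|ᵢ)` for all nonempty
`x`; consequently for every `N ≥ M` and `n ≥ 1` the set
`{x : |x|ᵢ = n, H₂(g(x)) ≤ N·f(n)}` is all of `Xᵢⁿ`, and the corresponding densities
tend to `1`. -/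
theorem stmt_16 {i : ℕ} (hi : 2 ≤ i) (Ui : Machine i) (hUi : IsUniversal Ui)
    (U2 : Machine 2) (hU2 : IsUniversal U2)
    (g : Str i → Str 2) (hg : GoedelNumbering Set.univ g)
    (f : ℕ → ℕ) (a : ℝ) (ha : 0 < a) (hf : ∀ n : ℕ, 1 ≤ n → a * (n : ℝ) ≤ (f n : ℝ)) :
    ∃ M : ℕ,
      (∀ x : Str i, x ≠ [] → Hc U2 (g x) ≤ ((M * f x.length : ℕ) : ℝ≥0∞)) ∧
      ∀ N : ℕ, M ≤ N →
        (∀ n : ℕ, 1 ≤ n →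
          {x : Str i | x.length = n ∧ Hc U2 (g x) ≤ ((N * f n : ℕ) : ℝ≥0∞)} =
            {x : Str i | x.length = n}) ∧
        Filter.Tendsto
          (fun n : ℕ =>
            (Set.ncard {x : Str i | x.length = n ∧ Hc U2 (g x) ≤ ((N * f n : ℕ) : ℝ≥0∞)} : ℝ)
              / (i : ℝ) ^ n)
          Filter.atTop (nhds 1) :=
  stmt_16_general hi U2 hU2 g hg f a ha hf
end
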